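/- Let (r+1,c) be an E-target of D ∈ MBPD(n) that is not in Case L, with left droop column λ and right droop column ρ. Then D admits the (r,[λ,ρ])-droop. -/
import Mathlib


namespace BPD

/-- The seven tiles of a marked bumpless pipedream:
blank, horizontal, vertical, plus, R, J, marked J. -/
inductive Tile
  | blank | horiz | vert | plus | rtile | jtile | mjtile
  deriving DecidableEq

/-- Does the tile contain a pipe end on its left edge? -/
def Tile.left : Tile → Bool
  | .horiz | .plus | .jtile | .mjtile => true
  | _ => false

/-- Does the tile contain a pipe end on its right edge? -/
def Tile.right : Tile → Bool
  | .horiz | .plus | .rtile => true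
  | _ => false

/-- Does the tile contain a pipe end on its top edge? -/
def Tile.up : Tile → Bool
  | .vert | .plus | .jtile | .mjtile => true
  | _ => false

/-- Does the tile contain a pipe end on its bottom edge? -/
def Tile.down : Tile → Bool
  | .vert | .plus | .rtile => true
  | _ => false

/-- A tile is heavy if it is a blank or a marked J; light otherwise. -/
def Tile.Heavy (t : Tile) : Prop := t = Tile.blank ∨ t = Tile.mjtile

instance : DecidablePred Tile.Heavy := fun t =>
  decidable_of_iff (t = Tile.blank ∨ t = Tile.mjtile) Iff.rfl

/-- Tile matrices, with the meaningful rows/columns indexed by `1, …, n`. -/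
abbrev Grid := ℕ → ℕ → Tile

/-- A valid marked bumpless pipedream of size `n`: pipe ends of adjacent tiles
match, a pipe enters every row from the right boundary, a pipe leaves every
column through the bottom boundary, no pipe meets the top or left boundary,
and (as a normalization making an `n × n` matrix) all entries outside the
board are `blank`. -/
def IsMBPD (n : ℕ) (D : Grid) : Prop :=
  (∀ i j, 1 ≤ i → i ≤ n → 1 ≤ j → j + 1 ≤ n → (D i j).right = (D i (j+1)).left) ∧
  (∀ i j, 1 ≤ i → i + 1 ≤ n → 1 ≤ j → j ≤ n → (D i j).down = (D (i+1) j).up) ∧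
  (∀ i, 1 ≤ i → i ≤ n → (D i n).right = true) ∧
  (∀ j, 1 ≤ j → j ≤ n → (D n j).down = true) ∧
  (∀ j, 1 ≤ j → j ≤ n → (D 1 j).up = false) ∧
  (∀ i, 1 ≤ i → i ≤ n → (D i 1).left = false) ∧
  (∀ i j, ¬ (1 ≤ i ∧ i ≤ n ∧ 1 ≤ j ∧ j ≤ n) → D i j = Tile.blank)

/-- `D_{r,[b,c]}` is a pipe segment: every strictly interior tile is
horizontal or plus. -/
def PipeSegment (D : Grid) (r b c : ℕ) : Prop :=
  ∀ j < c, b < j → (D r j = Tile.horiz ∨ D r j = Tile.plus)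

instance (D : Grid) (r b c : ℕ) : Decidable (PipeSegment D r b c) :=
  inferInstanceAs (Decidable (∀ j < c, b < j → (D r j = Tile.horiz ∨ D r j = Tile.plus)))

/-- `D_{[r,r+1],[b,d]}` is a doublecross. -/
def Doublecross (D : Grid) (r b d : ℕ) : Prop :=
  b < d ∧ PipeSegment D r b d ∧ PipeSegment D (r+1) b d ∧
    D r b = Tile.rtile ∧ D (r+1) d = Tile.jtile

/-- The RJ subsequence of the tiles of row `r` in columns `a, …, b-1`. -/
def rjWord (D : Grid) (r a b : ℕ) : List Tile :=
  ((List.Ico a b).map (D r)).filter (fun t => decide (t = Tile.rtile ∨ t = Tile.jtile))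

/-- A paired RJ word: zero or more consecutive pairs (an R then a J). -/
inductive Paired : List Tile → Prop
  | nil : Paired []
  | cons {w : List Tile} : Paired w → Paired (Tile.rtile :: Tile.jtile :: w)

/-- A single J followed by a paired word. -/
def TypeJ (w : List Tile) : Prop := ∃ w', Paired w' ∧ w = Tile.jtile :: w'

/-- A paired word followed by a single R. -/
def TypeR (w : List Tile) : Prop := ∃ w', Paired w' ∧ w = w' ++ [Tile.rtile]

/-- A single J, then a paired word, then a single R. -/
def TypeJR (w : List Tile) : Prop :=
  ∃ w', Paired w' ∧ w = Tile.jtile :: (w' ++ [Tile.rtile])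

/-- `D` admits the `(r,[b,d])`-droop. -/
def AdmitsDroop (D : Grid) (r b d : ℕ) : Prop :=
  b < d ∧
  (∀ j, b ≤ j → j ≤ d → ¬ (D r j).Heavy) ∧
  (∀ j, b ≤ j → j < d → ¬ (D (r+1) j).Heavy) ∧
  D (r+1) d ≠ Tile.mjtile ∧
  PipeSegment D r b d ∧
  Paired (rjWord D (r+1) (b+1) d) ∧
  D r b ≠ Tile.horiz ∧ D r d ≠ Tile.plus

/-- `D` admits the `(r,[b,d])`-undroop. -/
def AdmitsUndroop (D : Grid) (r b d : ℕ) : Prop :=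
  b < d ∧
  (∀ j, b ≤ j → j ≤ d → ¬ (D (r+1) j).Heavy) ∧
  (∀ j, b < j → j ≤ d → ¬ (D r j).Heavy) ∧
  D r b ≠ Tile.mjtile ∧
  PipeSegment D (r+1) b d ∧
  Paired (rjWord D r (b+1) d) ∧
  D (r+1) d ≠ Tile.horiz ∧ D (r+1) b ≠ Tile.plus

/-- The (unmarked) tile with the given pipe ends on its
left/right/top/bottom edges (junk value `blank` for impossible combinations). -/
def mkTile : Bool → Bool → Bool → Bool → Tile
  | false, false, false, false => Tile.blank
  | true,  true,  false, false => Tile.horiz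
  | false, false, true,  true  => Tile.vert
  | true,  true,  true,  true  => Tile.plus
  | false, true,  false, true  => Tile.rtile
  | true,  false, true,  false => Tile.jtile
  | _, _, _, _ => Tile.blank

/-- The `(r,[b,d])`-droop: the pipe segment of row `r` in columns `b, …, d`
drops to row `r+1`, kinks of row `r+1` strictly between columns `b` and `d`
move up to row `r`, vertical pipes are unchanged, and the corners transform
as `R → blank` or `plus → J` at `(r,b)` and `blank → J` or `R → plus` at
`(r+1,d)`. -/
def droop (D : Grid) (r b d : ℕ) : Grid := fun i j =>
  if i = r ∧ j = b then mkTile (D r b).left false (D r b).up false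
  else if i = r ∧ j = d then mkTile false (D r d).right (D r d).up true
  else if i = r + 1 ∧ j = b then mkTile (D (r+1) b).left true false (D (r+1) b).down
  else if i = r + 1 ∧ j = d then mkTile true (D (r+1) d).right true (D (r+1) d).down
  else if i = r ∧ b < j ∧ j < d then
    mkTile (D (r+1) j).left (D (r+1) j).right (D r j).up (D (r+1) j).down
  else if i = r + 1 ∧ b < j ∧ j < d then
    mkTile (D r j).left (D r j).right (D (r+1) j).down (D (r+1) j).down
  else D i j

/-- The `(r,[b,d])`-undroop, inverse to the `(r,[b,d])`-droop: the pipe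
segment of row `r+1` in columns `b, …, d` moves up to row `r`, kinks of row
`r` move down to row `r+1`, vertical pipes are unchanged, and the corners
transform as `blank → R` or `J → plus` at `(r,b)` and `J → blank` or
`plus → R` at `(r+1,d)`. -/
def undroop (D : Grid) (r b d : ℕ) : Grid := fun i j =>
  if i = r ∧ j = b then mkTile (D r b).left true (D r b).up true
  else if i = r ∧ j = d then mkTile true (D r d).right (D r d).up false
  else if i = r + 1 ∧ j = b then mkTile (D (r+1) b).left false true (D (r+1) b).down
  else if i = r + 1 ∧ j = d then mkTile false (D (r+1) d).right false (D (r+1) d).down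
  else if i = r ∧ b < j ∧ j < d then
    mkTile (D (r+1) j).left (D (r+1) j).right (D r j).up (D r j).up
  else if i = r + 1 ∧ b < j ∧ j < d then
    mkTile (D r j).left (D r j).right (D r j).up (D (r+1) j).down
  else D i j

/-- Remove the mark at `(r,c)` (if the tile there is a marked J). -/
def unmark (D : Grid) (r c : ℕ) : Grid := fun i j =>
  if i = r ∧ j = c ∧ D r c = Tile.mjtile then Tile.jtile else D i j

/-- Mark the tile at `(r,c)` if it is a J tile. -/
def markIfJ (D : Grid) (r c : ℕ) : Grid := fun i j =>
  if i = r ∧ j = c ∧ D r c = Tile.jtile then Tile.mjtile else D i j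

/-- `(r,c)` is an f-target of `D` with associated column `c'` (conditions
(f1), (f2) with `c'` minimal, (f3)). -/
def IsfTarget (n : ℕ) (D : Grid) (r c c' : ℕ) : Prop :=
  1 ≤ r ∧ r + 1 ≤ n ∧ 1 ≤ c ∧ c ≤ n ∧
  (D r c).Heavy ∧ (∀ j, c < j → j ≤ n → ¬ (D r j).Heavy) ∧
  c < c' ∧ c' ≤ n ∧ D (r+1) c' = Tile.jtile ∧
  (∀ j, c < j → j < c' → D (r+1) j ≠ Tile.jtile) ∧
  (∀ j, 1 ≤ j → j < c' → ¬ (D (r+1) j).Heavy)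

/-- `(r,c)` is an f*-target of `D` with associated column `c'` (conditions
(f1), (f*2) with `c'` the largest column carrying an R tile in row `r`, (f3)). -/
def IsfStarTarget (n : ℕ) (D : Grid) (r c c' : ℕ) : Prop :=
  1 ≤ r ∧ r + 1 ≤ n ∧ 1 ≤ c ∧ c ≤ n ∧
  (D r c).Heavy ∧ (∀ j, c < j → j ≤ n → ¬ (D r j).Heavy) ∧
  (∀ j, c < j → j ≤ n → D (r+1) j ≠ Tile.jtile ∧ D (r+1) j ≠ Tile.mjtile) ∧
  1 ≤ c' ∧ c' ≤ n ∧ D r c' = Tile.rtile ∧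
  (∀ j, c' < j → j ≤ n → D r j ≠ Tile.rtile) ∧
  (∀ j, 1 ≤ j → j < c' → ¬ (D (r+1) j).Heavy)

/-- An F-target is an f-target or an f*-target. -/
def IsFTarget (n : ℕ) (D : Grid) (r c c' : ℕ) : Prop :=
  IsfTarget n D r c c' ∨ IsfStarTarget n D r c c'

/-- Case B (blank) for an F-target. -/
def FCaseB (D : Grid) (r c : ℕ) : Prop := D r c = Tile.blank

/-- `b` is the left column of the window of the F-target `(r,c)`. -/
def FWindowLeft (D : Grid) (r c b : ℕ) : Prop :=
  (D r c = Tile.blank ∧ b = c) ∨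
  (D r c = Tile.mjtile ∧ 1 ≤ b ∧ b < c ∧ D r b = Tile.rtile ∧
    ∀ j, b < j → j < c → D r j ≠ Tile.rtile)

/-- Case C (crossing) for an F-target with window-left column `b`. -/
def FCaseC (D : Grid) (r c b : ℕ) : Prop :=
  D r c = Tile.mjtile ∧ PipeSegment D (r+1) b c

/-- Case C̸ (noncrossing) for an F-target with window-left column `b`. -/
def FCaseCbar (D : Grid) (r c b : ℕ) : Prop :=
  D r c = Tile.mjtile ∧ ¬ PipeSegment D (r+1) b c

/-- Case T (terminal) for an F-target. -/
def FCaseT (n : ℕ) (D : Grid) (r c c' : ℕ) : Prop := IsfStarTarget n D r c c'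

/-- Case D (doublecross) for an F-target. -/
def FCaseD (n : ℕ) (D : Grid) (r c c' : ℕ) : Prop :=
  IsfTarget n D r c c' ∧ ∃ d, c < d ∧ d < c' ∧ Doublecross D r d c'

/-- Case O (ordinary) for an F-target. -/
def FCaseO (n : ℕ) (D : Grid) (r c c' : ℕ) : Prop :=
  IsfTarget n D r c c' ∧ ¬ ∃ d, c < d ∧ d < c' ∧ Doublecross D r d c'

/-- `ρ` is the right droop column of the F-target `(r,c)` with associated
column `c'`: `ρ = c'` in Cases T and O, and `ρ = d` in Case D. -/
def FRightDroop (n : ℕ) (D : Grid) (r c c' ρ : ℕ) : Prop :=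
  ((FCaseT n D r c c' ∨ FCaseO n D r c c') ∧ ρ = c') ∨
  (IsfTarget n D r c c' ∧ c < ρ ∧ ρ < c' ∧ Doublecross D r ρ c')

/-- The F-move at the F-target `(r,c)` with window-left column `b`,
associated column `c'` and right droop column `ρ`: remove the mark at
`(r,c)` if marked; in Cases B and C (i.e. when `D_{r+1,[b,c]}` is a pipe
segment) perform the `(r,[c,ρ])`-undroop; then mark `(r+1,c')` if it is a J. -/
def Fmove (D : Grid) (r c b c' ρ : ℕ) : Grid :=
  markIfJ
    (if PipeSegment D (r+1) b c then undroop (unmark D r c) r c ρ else unmark D r c)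
    (r+1) c'

/-- `(r+1,c)` is an e-target of `D` with `c'` as in condition (e2)
(conditions (e1), (e2) with `c'` maximal, (e3)). -/
def IseTarget (n : ℕ) (D : Grid) (r c c' : ℕ) : Prop :=
  1 ≤ r ∧ r + 1 ≤ n ∧ 1 ≤ c ∧ c ≤ n ∧
  (D (r+1) c).Heavy ∧ (∀ j, 1 ≤ j → j < c → ¬ (D (r+1) j).Heavy) ∧
  1 ≤ c' ∧ c' < c ∧ D r c' = Tile.rtile ∧ ¬ PipeSegment D (r+1) c' c ∧
  (∀ j, c' < j → j < c → D r j = Tile.rtile → PipeSegment D (r+1) j c) ∧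
  (∀ j, c' < j → j ≤ n → ¬ (D r j).Heavy)

/-- `(r+1,c)` is an e*-target of `D` with `c'` as in condition (e2)
(conditions (e*1), (e2) with `c'` maximal, (e3)). -/
def IseStarTarget (n : ℕ) (D : Grid) (r c c' : ℕ) : Prop :=
  1 ≤ r ∧ r + 1 ≤ n ∧ 1 ≤ c ∧ c ≤ n ∧
  (∀ j, 1 ≤ j → j ≤ n → ¬ (D (r+1) j).Heavy) ∧
  (D r c = Tile.rtile ∨ D (r+1) c = Tile.rtile) ∧
  (∀ j, c < j → j ≤ n → D r j ≠ Tile.rtile ∧ D (r+1) j ≠ Tile.rtile) ∧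
  1 ≤ c' ∧ c' < c ∧ D r c' = Tile.rtile ∧ ¬ PipeSegment D (r+1) c' c ∧
  (∀ j, c' < j → j < c → D r j = Tile.rtile → PipeSegment D (r+1) j c) ∧
  (∀ j, c' < j → j ≤ n → ¬ (D r j).Heavy)

/-- An E-target is an e-target or an e*-target. -/
def IsETarget (n : ℕ) (D : Grid) (r c c' : ℕ) : Prop :=
  IseTarget n D r c c' ∨ IseStarTarget n D r c c'

/-- Case L (left turn) for an E-target `(r+1,c)` with window-left `c'`. -/
def ECaseL (D : Grid) (r c c' : ℕ) : Prop := ¬ PipeSegment D r c' c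

/-- Case D (doublecross) for an E-target. -/
def ECaseD (D : Grid) (r c c' : ℕ) : Prop :=
  PipeSegment D r c' c ∧ ∃ d, Doublecross D r c' d

/-- Case S (straight) for an E-target. -/
def ECaseS (D : Grid) (r c c' : ℕ) : Prop :=
  PipeSegment D r c' c ∧ ¬ ∃ d, Doublecross D r c' d

/-- Case I (initial) for an E-target. -/
def ECaseI (n : ℕ) (D : Grid) (r c c' : ℕ) : Prop := IseStarTarget n D r c c'

/-- Case P (plus) for an E-target. -/
def ECaseP (n : ℕ) (D : Grid) (r c c' : ℕ) : Prop :=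
  IseTarget n D r c c' ∧ D r c = Tile.plus

/-- Case P̸ (no plus) for an E-target. -/
def ECasePbar (n : ℕ) (D : Grid) (r c c' : ℕ) : Prop :=
  IseTarget n D r c c' ∧ D r c ≠ Tile.plus

/-- `lam` is the left droop column of the E-target `(r+1,c)` with
window-left `c'`. -/
def ELeftDroop (D : Grid) (r c c' lam : ℕ) : Prop :=
  (ECaseS D r c c' ∧ lam = c') ∨
  (ECaseD D r c c' ∧ c' < lam ∧ D (r+1) lam = Tile.jtile ∧
    ∀ j, c' < j → j < lam → D (r+1) j ≠ Tile.jtile) ∨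
  (ECaseL D r c c' ∧ c' < lam ∧ D r lam = Tile.jtile ∧
    ∀ j, c' < j → j < lam → D r j ≠ Tile.jtile)

/-- `ρ` is the right droop column of the E-target `(r+1,c)` with
window-left `c'`. -/
def ERightDroop (n : ℕ) (D : Grid) (r c c' ρ : ℕ) : Prop :=
  ((ECaseI n D r c c' ∨ ECasePbar n D r c c') ∧ ρ = c) ∨
  (ECaseP n D r c c' ∧ ρ < c ∧ D (r+1) ρ = Tile.rtile ∧
    ∀ j, ρ < j → j < c → D (r+1) j ≠ Tile.rtile)

/-- The E-move at the E-target `(r+1,c)` with window-left column `c'`,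
left droop column `lam` and right droop column `ρ`: remove the mark at
`(r+1,c)` if marked; in Cases S and D (i.e. when `D_{r,[c',c]}` is a pipe
segment) perform the `(r,[lam,ρ])`-droop; then mark `(r,lam)` if it is a J. -/
def Emove (D : Grid) (r c c' lam ρ : ℕ) : Grid :=
  markIfJ
    (if PipeSegment D r c' c then droop (unmark D (r+1) c) r lam ρ
     else unmark D (r+1) c)
    r lam

/-- Demazure (0-Hecke) product `s_a * w` (left multiplication by a simple
reflection): it is `s_a w` when `ℓ(s_a w) = ℓ(w) + 1`, i.e. when
`w⁻¹ a < w⁻¹ (a+1)`, and `w` otherwise. -/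
def dmul (a : ℕ) (w : Equiv.Perm ℕ) : Equiv.Perm ℕ :=
  if w⁻¹ a < w⁻¹ (a+1) then Equiv.swap a (a+1) * w else w

/-- Demazure (0-Hecke) product `w * s_a` (right multiplication by a simple
reflection): it is `w s_a` when `ℓ(w s_a) = ℓ(w) + 1`, i.e. when
`w a < w (a+1)`, and `w` otherwise. -/
def rdmul (w : Equiv.Perm ℕ) (a : ℕ) : Equiv.Perm ℕ :=
  if w a < w (a+1) then w * Equiv.swap a (a+1) else w

/-- The permutation `w(B) = s_{a_ℓ} * ⋯ * s_{a_1}` (Demazure product)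
associated to a sequence of biletters `B = ((i_1,a_1), …, (i_ℓ,a_ℓ))`. -/
def cpPerm (B : List (ℕ × ℕ)) : Equiv.Perm ℕ :=
  B.foldl (fun w p => dmul p.2 w) 1

/-- Coxeter length (inversion count on `{1,…,n}`) of a permutation
supported on `{1,…,n}`. -/
def lenPerm (n : ℕ) (w : Equiv.Perm ℕ) : ℕ :=
  (((Finset.Icc 1 n) ×ˢ (Finset.Icc 1 n)).filter
    (fun p => p.1 < p.2 ∧ w p.2 < w p.1)).card

/-- The list of states `(row, column, entered-from-East?)` visited by the pipe
of an MBPD beginning at the given state (with fuel). In an MBPD, every pipe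
moves only left and down. -/
def visitsFuel (n : ℕ) (D : Grid) : ℕ → ℕ → ℕ → Bool → List (ℕ × ℕ × Bool)
  | 0, _, _, _ => []
  | fuel+1, r, c, true =>
    (r, c, true) ::
      (match D r c with
       | Tile.horiz | Tile.plus => if 1 < c then visitsFuel n D fuel r (c-1) true else []
       | Tile.rtile => if r < n then visitsFuel n D fuel (r+1) c false else []
       | _ => [])
  | fuel+1, r, c, false =>
    (r, c, false) ::
      (match D r c with
       | Tile.vert | Tile.plus => if r < n then visitsFuel n D fuel (r+1) c false else []
       | Tile.jtile | Tile.mjtile => if 1 < c then visitsFuel n D fuel r (c-1) true else []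
       | _ => [])

/-- The pipe entering the right boundary of the MBPD at row `i` passes
through the tile `(r,c)`, entering it from the East (`e = true`) or from the
North (`e = false`). -/
def Visits (n : ℕ) (D : Grid) (i r c : ℕ) (e : Bool) : Prop :=
  (r, c, e) ∈ visitsFuel n D (2*n+2) i n true

/-- Pipes `i` and `j` of the MBPD cross at the plus tile `(r,c)`. -/
def CrossAt (n : ℕ) (D : Grid) (i j r c : ℕ) : Prop :=
  D r c = Tile.plus ∧
    ((Visits n D i r c true ∧ Visits n D j r c false) ∨
     (Visits n D i r c false ∧ Visits n D j r c true))

/-- Pipes `i` and `j` of the MBPD cross (at least once). -/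
def Crosses (n : ℕ) (D : Grid) (i j : ℕ) : Prop := ∃ r c, CrossAt n D i j r c

open Classical in
/-- The permutation associated to an MBPD: the pipe entering the right
boundary at row `i` exits the bottom boundary at column `w(i)`, where
crossings of a pair of pipes after their first crossing are ignored.
Equivalently, it is the unique permutation of `{1,…,n}` whose inversions are
exactly the pairs of pipes that cross at least once. -/
noncomputable def permOf (n : ℕ) (D : Grid) : Equiv.Perm ℕ :=
  if h : ∃ w : Equiv.Perm ℕ,
      (∀ k, (k < 1 ∨ n < k) → w k = k) ∧
      (∀ i j, 1 ≤ i → i < j → j ≤ n → (w j < w i ↔ Crosses n D i j))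
  then h.choose else 1

/-- An unmarked, reduced MBPD: no marked J tile, and no two pipes cross more
than once. -/
def ReducedMBPD (n : ℕ) (D : Grid) : Prop :=
  (∀ i j, D i j ≠ Tile.mjtile) ∧
  (∀ i j, 1 ≤ i → i < j → j ≤ n →
    ∀ r c r' c', CrossAt n D i j r c → CrossAt n D i j r' c' → r = r' ∧ c = c')

/-- A biletter: a pair `(i,a)` with `1 ≤ i ≤ a < n`. -/
def IsBiletter (n : ℕ) (p : ℕ × ℕ) : Prop := 1 ≤ p.1 ∧ p.1 ≤ p.2 ∧ p.2 < n

/-- The order on biletters: `p > q` iff `p.1 > q.1`, or `p.1 = q.1` and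
`p.2 < q.2`. -/
def BiletterGT (p q : ℕ × ℕ) : Prop := q.1 < p.1 ∨ (q.1 = p.1 ∧ p.2 < q.2)

/-- A reverse compatible pair: a strictly decreasing sequence of biletters. -/
def IsRCP (n : ℕ) (B : List (ℕ × ℕ)) : Prop :=
  (∀ p ∈ B, IsBiletter n p) ∧ B.Chain' BiletterGT

/-- The weight of a sequence of biletters: coordinate `i` counts the
biletters with first entry `i`. -/
def cpWeight (B : List (ℕ × ℕ)) (i : ℕ) : ℕ := B.countP (fun p => decide (p.1 = i))

/-- The weight of an MBPD: coordinate `i` counts the heavy tiles in row `i`. -/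
def rowWeight (n : ℕ) (D : Grid) (i : ℕ) : ℕ :=
  ((Finset.Icc 1 n).filter (fun j => (D i j).Heavy)).card

/-- The tiles of a (not necessarily reduced) pipedream: plus, bump, and the
J tile used on the antidiagonal boundary. -/
inductive PDTile
  | pplus | bump | pj
  deriving DecidableEq

/-- A pipedream of size `n`: a tiling of the staircase
`{(i,j) : i + j ≤ n + 1}` with J tiles exactly on the antidiagonal
`i + j = n + 1` and plus or bump tiles elsewhere (normalized to `bump`
outside the staircase). -/
def IsPD (n : ℕ) (P : ℕ → ℕ → PDTile) : Prop :=
  (∀ i j, 1 ≤ i → 1 ≤ j → i + j = n + 1 → P i j = PDTile.pj) ∧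
  (∀ i j, 1 ≤ i → 1 ≤ j → i + j ≤ n → (P i j = PDTile.pplus ∨ P i j = PDTile.bump)) ∧
  (∀ i j, ¬ (1 ≤ i ∧ 1 ≤ j ∧ i + j ≤ n + 1) → P i j = PDTile.bump)

/-- The tiling of the staircase with plus tiles exactly at the positions
`(i_k, a_k - i_k + 1)` for the biletters `(i_k, a_k)` of `B`, bump tiles at
all other interior positions, and J tiles on the antidiagonal. -/
def rcpToPD (n : ℕ) (B : List (ℕ × ℕ)) : ℕ → ℕ → PDTile := fun i j =>
  if 1 ≤ i ∧ 1 ≤ j ∧ i + j ≤ n + 1 then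
    if i + j = n + 1 then PDTile.pj
    else if (i, i + j - 1) ∈ B then PDTile.pplus else PDTile.bump
  else PDTile.bump

/-- The list of states `(row, column, entered-from-West?)` visited by a pipe
of a pipedream beginning at the given state (with fuel). In a pipedream,
every pipe moves only right and up. -/
def pdVisitsFuel (n : ℕ) (P : ℕ → ℕ → PDTile) : ℕ → ℕ → ℕ → Bool → List (ℕ × ℕ × Bool)
  | 0, _, _, _ => []
  | fuel+1, r, c, true =>
    (r, c, true) ::
      (match P r c with
       | PDTile.pplus => if c < n then pdVisitsFuel n P fuel r (c+1) true else []
       | PDTile.bump | PDTile.pj =>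
           if 1 < r then pdVisitsFuel n P fuel (r-1) c false else [])
  | fuel+1, r, c, false =>
    (r, c, false) ::
      (match P r c with
       | PDTile.pplus => if 1 < r then pdVisitsFuel n P fuel (r-1) c false else []
       | PDTile.bump => if c < n then pdVisitsFuel n P fuel r (c+1) true else []
       | PDTile.pj => [])

/-- The pipe entering the left boundary of the pipedream at row `i` passes
through the tile `(r,c)`, entering it from the West (`e = true`) or from the
South (`e = false`). -/
def PDVisits (n : ℕ) (P : ℕ → ℕ → PDTile) (i r c : ℕ) (e : Bool) : Prop :=
  (r, c, e) ∈ pdVisitsFuel n P (2*n+2) i 1 true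

/-- Pipes `i` and `j` of a pipedream cross (at least once). -/
def PDCrosses (n : ℕ) (P : ℕ → ℕ → PDTile) (i j : ℕ) : Prop :=
  ∃ r c, P r c = PDTile.pplus ∧
    ((PDVisits n P i r c true ∧ PDVisits n P j r c false) ∨
     (PDVisits n P i r c false ∧ PDVisits n P j r c true))

open Classical in
/-- The permutation associated to a pipedream: the pipe entering the left
boundary at row `i` exits the top boundary at column `w(i)`, where crossings
of a pair of pipes after their first crossing are ignored. Equivalently, it
is the unique permutation of `{1,…,n}` whose inversions are exactly the pairs
of pipes that cross at least once. -/
noncomputable def pdPermOf (n : ℕ) (P : ℕ → ℕ → PDTile) : Equiv.Perm ℕ :=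
  if h : ∃ w : Equiv.Perm ℕ,
      (∀ k, (k < 1 ∨ n < k) → w k = k) ∧
      (∀ i j, 1 ≤ i → i < j → j ≤ n → (w j < w i ↔ PDCrosses n P i j))
  then h.choose else 1

/-- The weight of a pipedream: coordinate `i` counts the plus tiles in row `i`. -/
def pdWeight (n : ℕ) (P : ℕ → ℕ → PDTile) (i : ℕ) : ℕ :=
  ((Finset.Icc 1 n).filter (fun j => P i j = PDTile.pplus)).card

lemma rjWord_eq_nil (D : Grid) (i a b : ℕ) (h : b ≤ a) : rjWord D i a b = [] := by
  simp [rjWord, List.Ico.eq_nil_of_le h]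

lemma rjWord_cons (D : Grid) (i a b : ℕ) (h : a < b) :
    rjWord D i a b =
      (if D i a = Tile.rtile ∨ D i a = Tile.jtile then [D i a] else []) ++
        rjWord D i (a+1) b := by
  rw [rjWord, rjWord, List.Ico.eq_cons h, List.map_cons, List.filter_cons]
  by_cases h1 : D i a = Tile.rtile ∨ D i a = Tile.jtile <;> simp [h1]

lemma pairedAux (D : Grid) (i b : ℕ) : ∀ m a, b - a ≤ m →
    (∀ j, a ≤ j → j < b → ¬ (D i j).Heavy) →
    (∀ j, a ≤ j → j + 1 < b → (D i j).right = (D i (j+1)).left) →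
    (a < b → (D i (b-1)).right = false) →
    (((D i a).left = false ∨ b ≤ a) → Paired (rjWord D i a b)) ∧
    ((D i a).left = true → a < b →
      ∃ w, rjWord D i a b = Tile.jtile :: w ∧ Paired w) := by
  intro m
  induction m with
  | zero =>
    intro a hm _ _ _
    exact ⟨fun _ => by rw [rjWord_eq_nil D i a b (by omega)]; exact Paired.nil,
           fun _ h => absurd h (by omega)⟩
  | succ m ih =>
    intro a hm hh hadj hexit
    by_cases hab : a < b
    · have hcons := rjWord_cons D i a b hab
      have hnh : ¬ (D i a).Heavy := hh a le_rfl hab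
      have ih' := ih (a+1) (by omega) (fun j h1 h2 => hh j (by omega) h2)
        (fun j h1 h2 => hadj j (by omega) h2) (fun _ => hexit hab)
      constructor
      · rintro (hl | hba)
        swap
        · omega
        cases htile : D i a with
        | blank => exact absurd (Or.inl htile) hnh
        | mjtile => exact absurd (Or.inr htile) hnh
        | horiz => rw [htile] at hl; simp [Tile.left] at hl
        | plus => rw [htile] at hl; simp [Tile.left] at hl
        | jtile => rw [htile] at hl; simp [Tile.left] at hl
        | vert =>
          have hw : rjWord D i a b = rjWord D i (a+1) b := by
            rw [hcons, htile]; simp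
          rw [hw]
          apply ih'.1
          by_cases h2 : a + 1 < b
          · left
            have := hadj a le_rfl h2
            rw [htile] at this
            exact this.symm
          · right; omega
        | rtile =>
          have h2 : a + 1 < b := by
            by_contra h2
            have hb1 : b - 1 = a := by omega
            have := hexit hab
            rw [hb1, htile] at this
            simp [Tile.right] at this
          have hleft : (D i (a+1)).left = true := by
            have := hadj a le_rfl h2
            rw [htile] at this
            exact this.symm
          obtain ⟨w, hw, hpw⟩ := ih'.2 hleft h2
          rw [hcons, htile, hw]
          simpa using Paired.cons hpw
      · intro hl hab'
        cases htile : D i a with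
        | blank => exact absurd (Or.inl htile) hnh
        | mjtile => exact absurd (Or.inr htile) hnh
        | vert => rw [htile] at hl; simp [Tile.left] at hl
        | rtile => rw [htile] at hl; simp [Tile.left] at hl
        | jtile =>
          refine ⟨rjWord D i (a+1) b, by rw [hcons, htile]; simp, ?_⟩
          apply ih'.1
          by_cases h2 : a + 1 < b
          · left
            have := hadj a le_rfl h2
            rw [htile] at this
            exact this.symm
          · right; omega
        | horiz =>
          have h2 : a + 1 < b := by
            by_contra h2
            have hb1 : b - 1 = a := by omega
            have := hexit hab
            rw [hb1, htile] at this
            simp [Tile.right] at this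
          have hleft : (D i (a+1)).left = true := by
            have := hadj a le_rfl h2
            rw [htile] at this
            exact this.symm
          obtain ⟨w, hw, hpw⟩ := ih'.2 hleft h2
          refine ⟨w, ?_, hpw⟩
          rw [hcons, htile, hw]
          simp
        | plus =>
          have h2 : a + 1 < b := by
            by_contra h2
            have hb1 : b - 1 = a := by omega
            have := hexit hab
            rw [hb1, htile] at this
            simp [Tile.right] at this
          have hleft : (D i (a+1)).left = true := by
            have := hadj a le_rfl h2
            rw [htile] at this
            exact this.symm
          obtain ⟨w, hw, hpw⟩ := ih'.2 hleft h2
          refine ⟨w, ?_, hpw⟩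
          rw [hcons, htile, hw]
          simp
    · exact ⟨fun _ => by rw [rjWord_eq_nil D i a b (by omega)]; exact Paired.nil,
             fun _ h => absurd h hab⟩

lemma noflip (D : Grid) (i : ℕ) : ∀ k a,
    (D i a).right = false →
    (∀ j, a < j → j ≤ a + k → ¬ (D i j).Heavy ∧ D i j ≠ Tile.rtile) →
    (∀ j, a ≤ j → j < a + k → (D i j).right = (D i (j+1)).left) →
    (D i (a + k)).right = false := by
  intro k
  induction k with
  | zero => intro a h _ _; simpa using h
  | succ k ih =>
    intro a h hl hadj
    have h1 : (D i (a+k)).right = false :=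
      ih a h (fun j hj1 hj2 => hl j hj1 (by omega)) (fun j hj1 hj2 => hadj j hj1 (by omega))
    have h2 : (D i (a+k+1)).left = false := by
      rw [← hadj (a+k) (by omega) (by omega)]; exact h1
    obtain ⟨hnh, hnr⟩ := hl (a+k+1) (by omega) (by omega)
    show (D i (a+k+1)).right = false
    cases htile : D i (a+k+1) <;> rw [htile] at h2 hnh hnr <;>
      revert h2 hnh hnr <;> decide
lemma coreDroop (n : ℕ) (D : Grid) (r lam ρ : ℕ) (hD : IsMBPD n D)
    (hrn : r + 1 ≤ n) (hlam1 : 1 ≤ lam) (hlt : lam < ρ) (hρn : ρ ≤ n)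
    (hnh1 : ∀ j, lam ≤ j → j ≤ ρ → ¬ (D r j).Heavy)
    (hnh2 : ∀ j, lam ≤ j → j < ρ → ¬ (D (r+1) j).Heavy)
    (hmj : D (r+1) ρ ≠ Tile.mjtile)
    (hps : PipeSegment D r lam ρ)
    (hlr : (D (r+1) lam).right = false)
    (hρl : (D (r+1) ρ).left = false)
    (hnhz : D r lam ≠ Tile.horiz)
    (hnp : D r ρ ≠ Tile.plus) : AdmitsDroop D r lam ρ := by
  obtain ⟨hadj, hvadj, hrest⟩ := hD
  refine ⟨hlt, hnh1, hnh2, hmj, hps, ?_, hnhz, hnp⟩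
  have hexit : lam + 1 < ρ → (D (r+1) (ρ-1)).right = false := by
    intro h
    have h2 := hadj (r+1) (ρ-1) (by omega) hrn (by omega) (by omega)
    rw [show ρ - 1 + 1 = ρ by omega] at h2
    rw [h2, hρl]
  have hentry : (D (r+1) (lam+1)).left = false ∨ ρ ≤ lam + 1 := by
    by_cases h : lam + 1 < ρ
    · left
      have h2 := hadj (r+1) lam (by omega) hrn hlam1 (by omega)
      rw [← h2, hlr]
    · right; omega
  exact (pairedAux D (r+1) ρ (ρ - (lam+1)) (lam+1) le_rfl
    (fun j h1 h2 => hnh2 j (by omega) h2)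
    (fun j h1 h2 => hadj (r+1) j (by omega) hrn (by omega) (by omega))
    (fun h => hexit h)).1 hentry

lemma lamFacts (n : ℕ) (D : Grid) (r c c' lam : ℕ) (hD : IsMBPD n D)
    (hr1 : 1 ≤ r) (hrn : r + 1 ≤ n) (hcn : c ≤ n)
    (hc'1 : 1 ≤ c') (hc'c : c' < c)
    (hRc' : D r c' = Tile.rtile)
    (hnseg : ¬ PipeSegment D (r+1) c' c)
    (hseg : PipeSegment D r c' c)
    (hrow1 : ∀ j, 1 ≤ j → j < c → ¬ (D (r+1) j).Heavy)
    (hrowr : ∀ j, c' < j → j ≤ n → ¬ (D r j).Heavy)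
    (hlam : ELeftDroop D r c c' lam) :
    c' ≤ lam ∧ lam < c ∧ (D (r+1) lam).right = false ∧
      D r lam ≠ Tile.horiz ∧ ¬ (D r lam).Heavy := by
  obtain ⟨hadj, hvadj, hrest⟩ := hD
  rcases hlam with ⟨⟨-, hnodc⟩, hlamc'⟩ | ⟨⟨-, d, hdc⟩, hc'lam, hlamJ, hlammin⟩ | ⟨hLL, -⟩
  · -- Case S : lam = c'
    subst hlamc'
    have hup : (D (r+1) lam).up = true := by
      have h := hvadj r lam hr1 hrn hc'1 (by omega)
      rw [hRc'] at h
      exact h.symm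
    have hlight : ¬ (D (r+1) lam).Heavy := hrow1 lam hc'1 hc'c
    have hnplus : D (r+1) lam ≠ Tile.plus := by
      intro hp
      apply hnodc
      have hex : ∃ j, lam < j ∧ j < c ∧
          ¬ (D (r+1) j = Tile.horiz ∨ D (r+1) j = Tile.plus) := by
        rw [PipeSegment] at hnseg
        push_neg at hnseg
        obtain ⟨j, hj1, hj2, hj3⟩ := hnseg
        exact ⟨j, hj2, hj1, by tauto⟩
      set d := Nat.find hex with hdd
      obtain ⟨hd1, hd2, hd3⟩ := Nat.find_spec hex
      have hmin : ∀ j, lam < j → j < d →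
          (D (r+1) j = Tile.horiz ∨ D (r+1) j = Tile.plus) := by
        intro j h1 h2
        by_contra hcj
        exact Nat.find_min hex h2 ⟨h1, by omega, hcj⟩
      have hleftd : (D (r+1) d).left = true := by
        have h2 := hadj (r+1) (d-1) (by omega) hrn (by omega) (by omega)
        rw [show d - 1 + 1 = d by omega] at h2
        by_cases hdd1 : d - 1 = lam
        · rw [hdd1, hp] at h2; exact h2.symm
        · rcases hmin (d-1) (by omega) (by omega) with h | h <;>
            rw [h] at h2 <;> exact h2.symm
      have hlightd : ¬ (D (r+1) d).Heavy := hrow1 d (by omega) hd2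
      have hJ : D (r+1) d = Tile.jtile := by
        cases htile : D (r+1) d <;> rw [htile] at hleftd hlightd hd3 <;>
          revert hleftd hlightd hd3 <;> decide
      exact ⟨d, hd1, fun j h1 h2 => hseg j (by omega) h2,
        fun j h1 h2 => hmin j h2 h1, hRc', hJ⟩
    refine ⟨le_rfl, hc'c, ?_, by rw [hRc']; decide, by rw [hRc']; decide⟩
    cases htile : D (r+1) lam <;> rw [htile] at hup hlight hnplus <;>
      revert hup hlight hnplus <;> decide
  · -- Case D
    obtain ⟨hc'd, hpsr, hpsr1, -, hJd⟩ := hdc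
    have hld : lam ≤ d := by
      by_contra h
      exact hlammin d hc'd (by omega) hJd
    have hlamd : lam = d := by
      by_contra h
      rcases hpsr1 lam (by omega) hc'lam with h' | h' <;> rw [h'] at hlamJ <;>
        exact absurd hlamJ (by decide)
    have hdlt : d < c := by
      by_contra h
      exact hnseg (fun j hjc hc'j => hpsr1 j (by omega) hc'j)
    have hdn : (D r lam).down = true := by
      have h := hvadj r lam hr1 hrn (by omega) (by omega)
      rw [hlamJ] at h
      exact h
    refine ⟨by omega, by omega, by rw [hlamJ]; decide, ?_,
      hrowr lam (by omega) (by omega)⟩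
    intro h
    rw [h] at hdn
    exact absurd hdn (by decide)
  · exact absurd hseg hLL
/-- an E-target not in Case L admits the `(r,[λ,ρ])`-droop. -/
theorem statement13 (n : ℕ) (D : Grid) (r c c' lam ρ : ℕ) (hD : IsMBPD n D)
    (hT : IsETarget n D r c c') (hL : ¬ ECaseL D r c c')
    (hlam : ELeftDroop D r c c' lam) (hρ : ERightDroop n D r c c' ρ) :
    AdmitsDroop D r lam ρ := by
  have hseg : PipeSegment D r c' c := not_not.mp hL
  rcases hρ with ⟨hIP, hρc⟩ | ⟨⟨hE, hplus⟩, hρlt, hρR, hρmax⟩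
  · rw [hρc]
    rcases hIP with hI | ⟨hE, hplus⟩
    · -- Case I : e*-target, ρ = c
      obtain ⟨hr1, hrn, hc1, hcn, hnone, hRor, hnoR, hc'1, hc'c, hRc', hnseg, hmax2, hrowr⟩ := hI
      have hrow1 : ∀ j, 1 ≤ j → j < c → ¬ (D (r+1) j).Heavy :=
        fun j h1 h2 => hnone j h1 (by omega)
      obtain ⟨hclam, hlamc, hlr, hnhz, hnhl⟩ :=
        lamFacts n D r c c' lam hD hr1 hrn hcn hc'1 hc'c hRc' hnseg hseg hrow1 hrowr hlam
      have hcc2 : c' + 2 ≤ c := by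
        rw [PipeSegment] at hnseg; push_neg at hnseg
        obtain ⟨j, hj1, hj2, -⟩ := hnseg; omega
      have hDl : (D r c).left = true := by
        have h2 := hD.1 r (c-1) hr1 (by omega) (by omega) (by omega)
        rw [show c-1+1 = c by omega] at h2
        rcases hseg (c-1) (by omega) (by omega) with h | h <;> rw [h] at h2 <;>
          exact h2.symm
      have hr1c : D (r+1) c = Tile.rtile := by
        rcases hRor with h | h
        · rw [h] at hDl; exact absurd hDl (by decide)
        · exact h
      have hnp : D r c ≠ Tile.plus := by
        have h := hD.2.1 r c hr1 hrn hc1 hcn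
        rw [hr1c] at h
        intro hp; rw [hp] at h; exact absurd h (by decide)
      refine coreDroop n D r lam c hD hrn (by omega) hlamc hcn
        (fun j h1 h2 => ?_)
        (fun j h1 h2 => hrow1 j (by omega) h2)
        (by rw [hr1c]; decide)
        (fun j h1 h2 => hseg j h1 (by omega))
        hlr (by rw [hr1c]; decide) hnhz hnp
      rcases eq_or_lt_of_le h1 with h | h
      · rw [← h]; exact hnhl
      · exact hrowr j (by omega) (by omega)
    · -- Case P̸ : e-target, D r c ≠ plus, ρ = c
      obtain ⟨hr1, hrn, hc1, hcn, hheavy, hrow1, hc'1, hc'c, hRc', hnseg, hmax2, hrowr⟩ := hE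
      obtain ⟨hclam, hlamc, hlr, hnhz, hnhl⟩ :=
        lamFacts n D r c c' lam hD hr1 hrn hcn hc'1 hc'c hRc' hnseg hseg hrow1 hrowr hlam
      have hcc2 : c' + 2 ≤ c := by
        rw [PipeSegment] at hnseg; push_neg at hnseg
        obtain ⟨j, hj1, hj2, -⟩ := hnseg; omega
      have hDl : (D r c).left = true := by
        have h2 := hD.1 r (c-1) hr1 (by omega) (by omega) (by omega)
        rw [show c-1+1 = c by omega] at h2
        rcases hseg (c-1) (by omega) (by omega) with h | h <;> rw [h] at h2 <;>
          exact h2.symm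
      have hbl : D (r+1) c = Tile.blank := by
        rcases hheavy with h | h
        · exact h
        · exfalso
          have hu := hD.2.1 r c hr1 hrn hc1 hcn
          rw [h] at hu
          have hnh := hrowr c (by omega) hcn
          have : D r c = Tile.plus := by
            cases htile : D r c <;> rw [htile] at hDl hu hnh <;>
              revert hDl hu hnh <;> decide
          exact hplus this
      refine coreDroop n D r lam c hD hrn (by omega) hlamc hcn
        (fun j h1 h2 => ?_)
        (fun j h1 h2 => hrow1 j (by omega) h2)
        (by rw [hbl]; decide)
        (fun j h1 h2 => hseg j h1 (by omega))
        hlr (by rw [hbl]; decide) hnhz hplus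
      rcases eq_or_lt_of_le h1 with h | h
      · rw [← h]; exact hnhl
      · exact hrowr j (by omega) (by omega)
  · -- Case P : e-target, D r c = plus
    obtain ⟨hr1, hrn, hc1, hcn, hheavy, hrow1, hc'1, hc'c, hRc', hnseg, hmax2, hrowr⟩ := hE
    obtain ⟨hclam, hlamc, hlr, hnhz, hnhl⟩ :=
      lamFacts n D r c c' lam hD hr1 hrn hcn hc'1 hc'c hRc' hnseg hseg hrow1 hrowr hlam
    have hm : D (r+1) c = Tile.mjtile := by
      rcases hheavy with h | h
      · exfalso
        have hu := hD.2.1 r c hr1 hrn hc1 hcn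
        rw [hplus, h] at hu
        exact absurd hu (by decide)
      · exact h
    have htrue : (D (r+1) (c-1)).right = true := by
      have h2 := hD.1 (r+1) (c-1) (by omega) hrn (by omega) (by omega)
      rw [show c-1+1 = c by omega, hm] at h2
      exact h2
    have hlamρ : lam < ρ := by
      by_contra hnot
      have hnf := noflip D (r+1) (c-1-lam) lam hlr
        (fun j hj1 hj2 => ⟨hrow1 j (by omega) (by omega), hρmax j (by omega) (by omega)⟩)
        (fun j hj1 hj2 => hD.1 (r+1) j (by omega) hrn (by omega) (by omega))
      rw [show lam + (c-1-lam) = c - 1 by omega] at hnf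
      rw [hnf] at htrue; exact absurd htrue (by decide)
    have hnp : D r ρ ≠ Tile.plus := by
      have h := hD.2.1 r ρ hr1 hrn (by omega) (by omega)
      rw [hρR] at h
      intro hp; rw [hp] at h; exact absurd h (by decide)
    refine coreDroop n D r lam ρ hD hrn (by omega) hlamρ (by omega)
      (fun j h1 h2 => ?_)
      (fun j h1 h2 => hrow1 j (by omega) (by omega))
      (by rw [hρR]; decide)
      (fun j h1 h2 => hseg j (by omega) (by omega))
      hlr (by rw [hρR]; decide) hnhz hnp
    rcases eq_or_lt_of_le h1 with h | h
    · rw [← h]; exact hnhl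
    · exact hrowr j (by omega) (by omega)

end BPD
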